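/- arXiv:0804.0475 — 2 statements merged into one kernel-verified Lean document; each statement's English description precedes it below -/
import Mathlib

section
/- Let Γ be a tree on the vertex set [m+1], and suppose for each edge {i,j} of Γ monomials u_{ij}, u_{ji} ∈ S = K[x_1,...,x_n] are given such that gcd(u_{i,b(i,j)}, u_{j,e(i,j)}) = 1 for all 1 ≤ i < j ≤ m+1. Then the monomials v_j = ∏_{i=1, i≠j}^{m+1} u_{i,b(i,j)}, j = 1,...,m+1, satisfy gcd(v_1, v_2, ..., v_{m+1}) = 1. -/
open MvPolynomial

namespace CMCodim2

noncomputable section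

/-- The total degree of an exponent vector (of a monomial). -/
def mdeg {σ : Type*} (a : σ →₀ ℕ) : ℕ := a.sum fun _ e => e

/-- The height (codimension) of an ideal: the infimum of the heights of the
prime ideals containing it. -/
def idealHeight {R : Type*} [CommRing R] (I : Ideal R) : ℕ∞ :=
  ⨅ (p : PrimeSpectrum R) (_ : I ≤ p.asIdeal), Order.height p

/-- An ideal `I` of a polynomial ring is a Cohen–Macaulay ideal of codimension `2`
iff it has height `2` and `R/I` has a free resolution
`0 → R^a → R^b → R → R/I → 0` of length `2` (Auslander–Buchsbaum). -/
def IsCMCodim2 {R : Type*} [CommRing R] (I : Ideal R) : Prop :=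
  idealHeight I = 2 ∧
    ∃ (a b : ℕ) (f : (Fin a → R) →ₗ[R] (Fin b → R)) (g : (Fin b → R) →ₗ[R] R),
      Function.Injective f ∧ LinearMap.range f = LinearMap.ker g ∧
        LinearMap.range g = I

/-- The map `φ₁ : S^{m+1} → S`, `e_i ↦ u_i`, where `u_i` is the (monic) monomial
with exponent vector `d i`. -/
def phi (K : Type*) [Field K] {σ : Type*} (m : ℕ) (d : Fin (m + 1) → (σ →₀ ℕ)) :
    (Fin (m + 1) → MvPolynomial σ K) →ₗ[MvPolynomial σ K] MvPolynomial σ K where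
  toFun v := ∑ i, v i * monomial (d i) 1
  map_add' x y := by simp [add_mul, Finset.sum_add_distrib]
  map_smul' c x := by simp [Finset.mul_sum, mul_assoc]

/-- The Taylor relation `r_{ij} = u_{ji} e_j - u_{ij} e_i ∈ S^{m+1}` of the monomials
`u_i, u_j` with exponent vectors `d i, d j`; here `u_{ji} = u_i / gcd(u_i,u_j)`
has exponent vector `d i - d j` (truncated subtraction). -/
def taylorRel (K : Type*) [Field K] {σ : Type*} (m : ℕ) (d : Fin (m + 1) → (σ →₀ ℕ))
    (i j : Fin (m + 1)) : Fin (m + 1) → MvPolynomial σ K := fun k =>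
  if k = j then monomial (d i - d j) 1
  else if k = i then -(monomial (d j - d i) 1) else 0

/-- `t` lists the `m` (unordered) pairs of indices of Taylor relations forming the rows of
a Hilbert–Burch matrix of the ideal generated by the `m+1` monomials with exponent
vectors `d i`: the corresponding Taylor relations generate (hence, being `m` elements
generating the free rank-`m` module, minimally generate) the first syzygy module
`U = ker φ₁`. -/
def IsHB (K : Type*) [Field K] {σ : Type*} (m : ℕ) (d : Fin (m + 1) → (σ →₀ ℕ))
    (t : Fin m → Fin (m + 1) × Fin (m + 1)) : Prop :=
  (∀ k, (t k).1 ≠ (t k).2) ∧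
    Submodule.span (MvPolynomial σ K)
        (Set.range fun k => taylorRel K m d (t k).1 (t k).2) =
      LinearMap.ker (phi K m d)

/-- The graph on `[m+1]` whose edges `{i,j}` are the pairs of columns in which the rows
of a Hilbert–Burch matrix (given by the list `t` of pairs) have their nonzero entries. -/
def relGraph {m : ℕ} (t : Fin m → Fin (m + 1) × Fin (m + 1)) :
    SimpleGraph (Fin (m + 1)) :=
  SimpleGraph.fromRel fun i j => ∃ k, t k = (i, j)

/-- `T(I)`: the set of relation trees (graphs of Hilbert–Burch matrices) of the ideal
generated by the `m+1` monomials with exponent vectors `d i`. -/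
def relTrees (K : Type*) [Field K] {σ : Type*} (m : ℕ) (d : Fin (m + 1) → (σ →₀ ℕ)) :
    Set (SimpleGraph (Fin (m + 1))) :=
  {Γ | ∃ t, IsHB K m d t ∧ relGraph t = Γ}

/-- The Taylor graph `G(I)`: the union of all relation trees of `I`. -/
def taylorGraph (K : Type*) [Field K] {σ : Type*} (m : ℕ)
    (d : Fin (m + 1) → (σ →₀ ℕ)) : SimpleGraph (Fin (m + 1)) :=
  sSup (relTrees K m d)

/-- `I` is (the monomial ideal) minimally generated by the `m+1` monic monomials with
exponent vectors `d i`. -/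
def MinGens (K : Type*) [Field K] {σ : Type*} (m : ℕ) (d : Fin (m + 1) → (σ →₀ ℕ))
    (I : Ideal (MvPolynomial σ K)) : Prop :=
  I = Ideal.span (Set.range fun i => (monomial (d i) 1 : MvPolynomial σ K)) ∧
    ∀ j : Fin (m + 1), (monomial (d j) 1 : MvPolynomial σ K) ∉
      Ideal.span ((fun i => (monomial (d i) 1 : MvPolynomial σ K)) '' {i | i ≠ j})

/-- The ideal generated by the `m+1` monomials with exponent vectors `d i` has a linear
resolution: all generators have the same degree and all the entries of every
Hilbert–Burch matrix of `I` are linear forms (i.e. every Taylor relation occurring as a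
row of a Hilbert–Burch matrix is linear). -/
def HasLinearRes (K : Type*) [Field K] {σ : Type*} (m : ℕ)
    (d : Fin (m + 1) → (σ →₀ ℕ)) : Prop :=
  (∃ c, ∀ i, mdeg (d i) = c) ∧
    ∀ t, IsHB K m d t →
      ∀ k, mdeg (d (t k).1 - d (t k).2) = 1 ∧ mdeg (d (t k).2 - d (t k).1) = 1

/-- A graph is chordal if every cycle of length at least `4` has a chord, i.e. an edge
of the graph joining two vertices of the cycle which is not an edge of the cycle. -/
def IsChordal {V : Type*} (G : SimpleGraph V) : Prop :=
  ∀ ⦃v : V⦄ (w : G.Walk v v), w.IsCycle → 4 ≤ w.length →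
    ∃ a b, a ∈ w.support ∧ b ∈ w.support ∧ G.Adj a b ∧ s(a, b) ∉ w.edges

/-- A maximal clique of a graph. -/
def IsMaxClique {V : Type*} (G : SimpleGraph V) (s : Set V) : Prop :=
  G.IsClique s ∧ ∀ t : Set V, G.IsClique t → s ⊆ t → t = s

/-- `b` is the "path-begin" function of the tree `G`: for `i ≠ j`, `b i j` is the
first vertex after `i` on the unique path in `G` from `i` to `j` (equivalently, the
neighbour of `i` which is one step closer to `j`). -/
def PathBegin {V : Type*} (G : SimpleGraph V) (b : V → V → V) : Prop :=
  ∀ i j : V, i ≠ j → G.Adj i (b i j) ∧ G.dist (b i j) j + 1 = G.dist i j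

/-- The index set of the `2m` indeterminates `x_{ij}`: ordered pairs `(i,j)` such that
`{i,j}` is an edge of `G`. -/
abbrev EdgeVar {N : ℕ} (G : SimpleGraph (Fin N)) : Type :=
  {p : Fin N × Fin N // G.Adj p.1 p.2}

/-- `ε` enumerates the edges of `G` (each unordered edge appearing exactly once). -/
def EdgeEnum {m : ℕ} (G : SimpleGraph (Fin (m + 1)))
    (ε : Fin m → Fin (m + 1) × Fin (m + 1)) : Prop :=
  ∀ i j : Fin (m + 1), G.Adj i j → ∃! k, ε k = (i, j) ∨ ε k = (j, i)

/-- The generic matrix `A(Γ)` attached to the tree `G` with edges enumerated by `ε`: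
the `k`-th row, for the `k`-th edge `{i,j}`, has entry `-x_{ij}` in column `i`,
entry `x_{ji}` in column `j` and `0` elsewhere. -/
def genMat (K : Type*) [Field K] {m : ℕ} (G : SimpleGraph (Fin (m + 1)))
    (ε : Fin m → Fin (m + 1) × Fin (m + 1)) (hε : ∀ k, G.Adj (ε k).1 (ε k).2) :
    Matrix (Fin m) (Fin (m + 1)) (MvPolynomial (EdgeVar G) K) := fun k l =>
  if l = (ε k).1 then -(X ⟨ε k, hε k⟩)
  else if l = (ε k).2 then X ⟨((ε k).2, (ε k).1), (hε k).symm⟩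
  else 0

/-- `v_j`: the maximal minor of the generic matrix `A(Γ)` obtained by omitting the
`j`-th column. -/
def genMinor (K : Type*) [Field K] {m : ℕ} (G : SimpleGraph (Fin (m + 1)))
    (ε : Fin m → Fin (m + 1) × Fin (m + 1)) (hε : ∀ k, G.Adj (ε k).1 (ε k).2)
    (j : Fin (m + 1)) : MvPolynomial (EdgeVar G) K :=
  ((genMat K G ε hε).submatrix id j.succAbove).det

/-- The monomial `∏_{i ≠ j} x_{i, b(i,j)}`. -/
def genV (K : Type*) [Field K] {m : ℕ} (G : SimpleGraph (Fin (m + 1)))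
    (b : Fin (m + 1) → Fin (m + 1) → Fin (m + 1))
    (hb : ∀ i j : Fin (m + 1), i ≠ j → G.Adj i (b i j)) (j : Fin (m + 1)) :
    MvPolynomial (EdgeVar G) K :=
  ∏ i, if h : i = j then 1 else X ⟨(i, b i j), hb i j h⟩

/-- The exponent vector of the monomial `∏_{i ≠ j} x_{i, b(i,j)}`. -/
def genD {m : ℕ} (G : SimpleGraph (Fin (m + 1)))
    (b : Fin (m + 1) → Fin (m + 1) → Fin (m + 1))
    (hb : ∀ i j : Fin (m + 1), i ≠ j → G.Adj i (b i j)) (j : Fin (m + 1)) :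
    EdgeVar G →₀ ℕ :=
  ∑ i, if h : i = j then 0 else Finsupp.single ⟨(i, b i j), hb i j h⟩ 1

end

end CMCodim2

/-!
Fix a variable `x_s` and say that `i` points at its neighbour `k` when `x_s ∣ u_{ik}`. The
coprimality hypothesis says that two vertices never point at each other along the path
joining them. Then some vertex `j` is pointed at by no path towards it: otherwise, following
the pointers from a vertex `i` pointing towards `j` leads into ever smaller branches of the
tree. For that `j`, `x_s ∤ v_j`. Divisors of a monomial are unit multiples of monomials, so a
common divisor of all `v_j` involves no variable and is a unit.
-/

namespace SimpleGraph.Walk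

variable {V : Type*} {G : SimpleGraph V}

lemma IsPath.append_of_support_inter {u v w : V} {p : G.Walk u v} {q : G.Walk v w}
    (hp : p.IsPath) (hq : q.IsPath) (h : ∀ y ∈ p.support, y ∈ q.support → y = v) :
    (p.append q).IsPath := by
  rw [isPath_def, support_append, List.nodup_append]
  refine ⟨hp.support_nodup, hq.support_nodup.tail, ?_⟩
  rintro y hyp _ hyq rfl
  obtain rfl := h y hyp (List.mem_of_mem_tail hyq)
  have hnd := hq.support_nodup
  rw [← q.cons_tail_support] at hnd
  exact (List.nodup_cons.mp hnd).1 hyq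

end SimpleGraph.Walk

namespace CMCodim2

open SimpleGraph Walk

section PathBegin

variable {V : Type*} {G : SimpleGraph V} {b : V → V → V}

lemma PathBegin.eq_snd (hb : PathBegin G b) (hG : G.IsTree) {i j : V} (hij : i ≠ j)
    {p : G.Walk i j} (hp : p.IsPath) : b i j = p.snd := by
  obtain ⟨hadj, hdist⟩ := hb i j hij
  obtain ⟨q, hq, hql⟩ := hG.connected.exists_path_of_dist (b i j) j
  have hi : i ∉ q.support := by
    classical
    intro hmem
    have := G.dist_le (q.dropUntil i hmem)
    have := q.length_dropUntil_le_length hmem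
    omega
  rw [(hG.existsUnique_path i j).unique hp (hq.cons hi (h := hadj)), snd_cons]

lemma PathBegin.eq_of_mem_support (hb : PathBegin G b) (hG : G.IsTree) {i y z : V}
    {p : G.Walk i z} (hp : p.IsPath) (hy : y ∈ p.support) (hyi : y ≠ i) :
    b i y = b i z := by
  classical
  have hiz : i ≠ z := by
    rintro rfl
    rw [nil_iff_support_eq.1 (isPath_iff_nil.1 hp), List.mem_singleton] at hy
    exact hyi hy
  rw [hb.eq_snd hG hyi.symm (hp.takeUntil hy), snd_takeUntil hyi, hb.eq_snd hG hiz hp]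

/-- If `x` and `i` lie in different directions from `j`, then `j` lies on the path from
`i` to `x`. -/
lemma PathBegin.eq_of_ne (hb : PathBegin G b) (hG : G.IsTree) {i j x : V} (hij : i ≠ j)
    (hx : b j x ≠ b j i) : b i x = b i j := by
  obtain ⟨q₁, hq₁, -⟩ := hG.connected.exists_path_of_dist i j
  obtain ⟨q₂, hq₂, -⟩ := hG.connected.exists_path_of_dist j x
  have hxi : x ≠ i := by rintro rfl; exact hx rfl
  have hjoin : (q₁.append q₂).IsPath := by
    refine hq₁.append_of_support_inter hq₂ fun y hy₁ hy₂ => ?_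
    by_contra hyj
    have h₁ := hb.eq_of_mem_support hG hq₁.reverse (by simpa using hy₁) hyj
    have h₂ := hb.eq_of_mem_support hG hq₂ hy₂ hyj
    exact hx (h₂ ▸ h₁)
  rw [hb.eq_snd hG hxi.symm hjoin, hb.eq_snd hG hij hq₁, snd, getVert_append',
    if_pos (show 1 ≤ q₁.length from not_nil_iff_lt_length.1 (not_nil_of_ne hij))]

/-- The vertices `x` whose path from `i` does not leave `i` through `k`; for a neighbour `k`
of `i` this is the component of `i` once the edge `ik` is removed. -/
def branch (b : V → V → V) (i k : V) : Set V :=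
  {x | x = i ∨ b i x ≠ k}

lemma PathBegin.branch_ssubset (hb : PathBegin G b) (hG : G.IsTree) {i i' k : V}
    (hi' : i' ≠ i) (hk : b i i' ≠ k) : branch b i' (b i' i) ⊂ branch b i k := by
  have hsub : branch b i' (b i' i) ⊆ branch b i k := by
    rintro x (rfl | hx)
    · exact Or.inr hk
    · exact Or.inr (hb.eq_of_ne hG hi'.symm hx ▸ hk)
  refine (Set.ssubset_iff_of_subset hsub).2 ⟨i, Or.inl rfl, ?_⟩
  rintro (h | h)
  · exact hi' h.symm
  · exact h rfl

theorem PathBegin.exists_forall_of_forall_or [Finite V] (hb : PathBegin G b)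
    (hG : G.IsTree) {Q : V → V → Prop}
    (hQ : ∀ i j, i ≠ j → Q i (b i j) ∨ Q j (b j i)) : ∃ j, ∀ i, i ≠ j → Q i (b i j) := by
  by_contra! hcon
  suffices ∀ n i j, (branch b i (b i j)).ncard = n → i ≠ j → ¬Q i (b i j) → False by
    obtain ⟨j⟩ := hG.connected.nonempty
    obtain ⟨i, hij, hQij⟩ := hcon j
    exact this _ i j rfl hij hQij
  intro n
  induction n using Nat.strong_induction_on with
  | _ n ih =>
  rintro i j rfl hij hQij
  obtain ⟨i', hi', hQi'⟩ := hcon i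
  have hQi : Q i (b i i') := (hQ i i' hi'.symm).resolve_right hQi'
  have hne : b i i' ≠ b i j := fun h => hQij (h ▸ hQi)
  exact ih _ (Set.ncard_lt_ncard (hb.branch_ssubset hG hi' hne)) i' i rfl hi' hQi'

end PathBegin

end CMCodim2

namespace MvPolynomial

variable {R σ ι : Type*} [CommRing R] [IsDomain R]

lemma eq_zero_or_eq_zero_of_isRelPrime_monomial {a c : σ →₀ ℕ}
    (h : IsRelPrime (monomial a (1 : R)) (monomial c 1)) (s : σ) : a s = 0 ∨ c s = 0 := by
  by_contra! hs
  exact X_prime.not_isUnit (h (X_dvd_monomial.2 (Or.inr hs.1)) (X_dvd_monomial.2 (Or.inr hs.2)))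

lemma isUnit_of_forall_dvd_monomial [Nonempty ι] {d : ι → σ →₀ ℕ} {p : MvPolynomial σ R}
    (hp : ∀ j, p ∣ monomial (d j) 1) (hd : ∀ s, ∃ j, d j s = 0) : IsUnit p := by
  obtain ⟨j₀⟩ := ‹Nonempty ι›
  obtain ⟨e, u, -, hu, rfl⟩ := dvd_monomial_one_iff_exists.1 (hp j₀)
  have he : e = 0 := by
    ext s
    obtain ⟨j, hj⟩ := hd s
    exact Nat.le_zero.1 (hj ▸ (monomial_dvd_monomial.1 (hp j)).1.resolve_left one_ne_zero s)
  rw [he, monomial_zero']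
  exact hu.map C

end MvPolynomial

open CMCodim2 MvPolynomial
/-- Let `Γ` be a tree on the vertex set `[m+1]`, and suppose for each
edge `{i,j}` of `Γ` monomials `u_{ij}, u_{ji} ∈ S = K[x_1,...,x_n]` (encoded by their
exponent vectors) are given such that `gcd(u_{i,b(i,j)}, u_{j,e(i,j)}) = 1` for all
`i < j`. Then the monomials `v_j = ∏_{i ≠ j} u_{i,b(i,j)}` satisfy
`gcd(v_1,...,v_{m+1}) = 1`, i.e. every common divisor of all the `v_j` is a unit. -/
theorem statement5 (K : Type*) [Field K] {n m : ℕ}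
    (Γ : SimpleGraph (Fin (m + 1))) (hΓ : Γ.IsTree)
    (b : Fin (m + 1) → Fin (m + 1) → Fin (m + 1)) (hb : PathBegin Γ b)
    (w : Fin (m + 1) → Fin (m + 1) → (Fin n →₀ ℕ))
    (hgcd : ∀ i j : Fin (m + 1), i < j →
      IsRelPrime (monomial (w i (b i j)) 1 : MvPolynomial (Fin n) K)
        (monomial (w j (b j i)) 1)) :
    ∀ p : MvPolynomial (Fin n) K,
      (∀ j : Fin (m + 1),
        p ∣ ∏ i, if i = j then 1 else (monomial (w i (b i j)) 1 : MvPolynomial (Fin n) K)) →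
      IsUnit p := by
  intro p hp
  set v : Fin (m + 1) → Fin n →₀ ℕ := fun j => ∑ i, if i = j then 0 else w i (b i j)
  have hv : ∀ j, (∏ i, if i = j then 1 else (monomial (w i (b i j)) 1 : MvPolynomial (Fin n) K))
      = monomial (v j) 1 := fun j => by
    rw [monomial_sum_one]
    exact Finset.prod_congr rfl fun i _ => by split_ifs <;> simp
  have hcoprime : ∀ s i j, i ≠ j → w i (b i j) s = 0 ∨ w j (b j i) s = 0 := fun s i j hij =>
    hij.lt_or_gt.elim (fun h => eq_zero_or_eq_zero_of_isRelPrime_monomial (hgcd i j h) s)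
      fun h => (eq_zero_or_eq_zero_of_isRelPrime_monomial (hgcd j i h) s).symm
  refine isUnit_of_forall_dvd_monomial (fun j => hv j ▸ hp j) fun s => ?_
  obtain ⟨j, hj⟩ :=
    hb.exists_forall_of_forall_or hΓ (Q := fun i k => w i k s = 0) (hcoprime s)
  refine ⟨j, ?_⟩
  simp only [v, Finsupp.finsetSum_apply]
  exact Finset.sum_eq_zero fun i _ => by split_ifs with h <;> simp [h, hj]
end

section
/- Let I ⊂ S be a Cohen–Macaulay monomial ideal of codimension 2 with a linear resolution. Then T(I) = T(G(I)): the set of relation trees of I is exactly the set of spanning trees of the Taylor graph G(I). -/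
open MvPolynomial

/-!
A relation tree is a spanning tree of `G(I)`; the content is the converse. For a set `A` of
columns let `ψ_A(v) = ∑_{i ∈ A} v_i u_i`. It kills every Taylor relation `r_pq` with `p, q` on
the same side of `A` and sends one with `p ∈ A`, `q ∉ A` to `-lcm(u_p, u_q)`. Taking for `A` a
connected component of the relation tree shows that it is connected, hence a tree.
Now let `A` be one side of the cut obtained by deleting the edge `{a, b}` of the row `r_ab`
from the relation tree. Writing a crossing relation `r_ij = ∑ c_k r_k` in terms of the rows and
applying `ψ_A` gives `lcm(u_i, u_j) = c_ab · lcm(u_a, u_b)`. With a linear resolution all edges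
of `G(I)` have lcms of the same degree, so `c_ab = 1` and the row `r_ab` can be exchanged for
`r_ij`. A spanning tree `Γ ⊆ G(I)` is connected, so every cut is crossed by an edge of `Γ`, and
exchanging the rows one at a time turns any Hilbert–Burch matrix into one whose relation tree
is `Γ`.
-/

lemma Finsupp.tsub_add_eq_sup {σ : Type*} (a b : σ →₀ ℕ) : a - b + b = a ⊔ b := by
  ext s
  simp only [Finsupp.add_apply, Finsupp.tsub_apply, Finsupp.sup_apply]
  omega

lemma SimpleGraph.Adj.reachable_iff_reachable {V : Type*} {G : SimpleGraph V} {p x y : V}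
    (h : G.Adj x y) : G.Reachable p x ↔ G.Reachable p y :=
  ⟨fun hx => hx.trans h.reachable, fun hy => hy.trans h.symm.reachable⟩

lemma SimpleGraph.Connected.exists_adj_mem_notMem {V : Type*} {G : SimpleGraph V}
    (hG : G.Connected) {S : Set V} {a b : V} (ha : a ∈ S) (hb : b ∉ S) :
    ∃ i j, G.Adj i j ∧ i ∈ S ∧ j ∉ S := by
  obtain ⟨e, -, he⟩ := (hG a b).some.exists_boundary_dart S ha hb
  exact ⟨e.fst, e.snd, e.adj, he⟩

lemma Submodule.span_range_update_sum_smul {R M ι : Type*} [Ring R] [AddCommGroup M]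
    [Module R M] [Fintype ι] [DecidableEq ι] (v : ι → M) (c : ι → R) {k₀ : ι} (hc : c k₀ = 1) :
    span R (Set.range (Function.update v k₀ (∑ k, c k • v k))) = span R (Set.range v) := by
  set N := span R (Set.range (Function.update v k₀ (∑ k, c k • v k)))
  have hv : ∀ k ≠ k₀, v k ∈ N := fun k hk => subset_span ⟨k, Function.update_of_ne hk _ _⟩
  have hv₀ : v k₀ ∈ N := by
    have hsum : ∑ k, c k • v k ∈ N := subset_span ⟨k₀, Function.update_self ..⟩
    rw [← Finset.add_sum_erase _ _ (Finset.mem_univ k₀), hc, one_smul] at hsum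
    exact (Submodule.add_mem_iff_left _ (Submodule.sum_mem _ fun k hk =>
      smul_mem _ _ (hv k (Finset.ne_of_mem_erase hk)))).mp hsum
  refine le_antisymm (span_le.mpr (Set.range_subset_iff.mpr fun k => ?_))
    (span_le.mpr (Set.range_subset_iff.mpr fun k => ?_))
  · rcases eq_or_ne k k₀ with rfl | hk
    · rw [Function.update_self]
      exact Submodule.sum_mem _ fun j _ => smul_mem _ _ (subset_span ⟨j, rfl⟩)
    · rw [Function.update_of_ne hk]
      exact subset_span ⟨k, rfl⟩
  · rcases eq_or_ne k k₀ with rfl | hk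
    exacts [hv₀, hv k hk]

namespace CMCodim2

open SimpleGraph

variable {K : Type*} [Field K] {σ : Type*} {m : ℕ}

section ExponentVectors

lemma mdeg_sup (a b : σ →₀ ℕ) : mdeg (a ⊔ b) = mdeg (a - b) + mdeg b := by
  rw [← Finsupp.tsub_add_eq_sup]
  exact map_add Finsupp.degree (a - b) b

lemma eq_of_le_of_mdeg_le {a b : σ →₀ ℕ} (h : a ≤ b) (hd : mdeg b ≤ mdeg a) : a = b := by
  have hsum : mdeg b = mdeg a + mdeg (b - a) := by
    conv_lhs => rw [← add_tsub_cancel_of_le h]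
    exact map_add Finsupp.degree a (b - a)
  have hzero : b - a = 0 := (Finsupp.degree_eq_zero_iff _).mp (by
    change mdeg (b - a) = 0
    omega)
  exact le_antisymm h (tsub_eq_zero_iff_le.mp hzero)

end ExponentVectors

section CutFunctional

variable (K) (d : Fin (m + 1) → (σ →₀ ℕ))

noncomputable def cutPhi (A : Finset (Fin (m + 1))) :
    (Fin (m + 1) → MvPolynomial σ K) →ₗ[MvPolynomial σ K] MvPolynomial σ K where
  toFun v := ∑ i ∈ A, v i * monomial (d i) 1
  map_add' x y := by simp [add_mul, Finset.sum_add_distrib]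
  map_smul' c x := by simp [Finset.mul_sum, mul_assoc]

lemma phi_eq_cutPhi_univ : phi K m d = cutPhi K d Finset.univ := rfl

variable {K d} {A : Finset (Fin (m + 1))} {p q : Fin (m + 1)}

lemma cutPhi_single (i : Fin (m + 1)) (c : MvPolynomial σ K) :
    cutPhi K d A (Pi.single i c) = if i ∈ A then c * monomial (d i) 1 else 0 := by
  simp [cutPhi, Pi.single_apply]

lemma taylorRel_eq_single_sub_single (hpq : p ≠ q) :
    taylorRel K m d p q =
      Pi.single q (monomial (d p - d q) 1) - Pi.single p (monomial (d q - d p) 1) := by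
  ext k
  by_cases hq : k = q
  · subst hq; simp [taylorRel, hpq.symm]
  · by_cases hp : k = p
    · subst hp; simp [taylorRel, hpq]
    · simp [taylorRel, hp, hq]

lemma cutPhi_taylorRel (hpq : p ≠ q) :
    cutPhi K d A (taylorRel K m d p q) =
      (if q ∈ A then monomial (d p ⊔ d q) 1 else 0) -
        if p ∈ A then monomial (d p ⊔ d q) 1 else 0 := by
  simp only [taylorRel_eq_single_sub_single hpq, map_sub, cutPhi_single, monomial_mul, one_mul,
    Finsupp.tsub_add_eq_sup, sup_comm (d q)]

lemma cutPhi_taylorRel_eq_zero (hpq : p ≠ q) (hA : p ∈ A ↔ q ∈ A) :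
    cutPhi K d A (taylorRel K m d p q) = 0 := by
  rw [cutPhi_taylorRel hpq]
  simp only [hA, sub_self]

lemma cutPhi_taylorRel_of_mem_of_notMem (hp : p ∈ A) (hq : q ∉ A) :
    cutPhi K d A (taylorRel K m d p q) = -monomial (d p ⊔ d q) 1 := by
  rw [cutPhi_taylorRel (ne_of_mem_of_not_mem hp hq), if_neg hq, if_pos hp, zero_sub]

lemma taylorRel_mem_ker_phi (hpq : p ≠ q) : taylorRel K m d p q ∈ LinearMap.ker (phi K m d) := by
  rw [LinearMap.mem_ker, phi_eq_cutPhi_univ]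
  exact cutPhi_taylorRel_eq_zero hpq (by simp)

end CutFunctional

section HilbertBurch

variable {d : Fin (m + 1) → (σ →₀ ℕ)} {t : Fin m → Fin (m + 1) × Fin (m + 1)}

lemma relGraph_adj_row (ht : ∀ k, (t k).1 ≠ (t k).2) (k : Fin m) :
    (relGraph t).Adj (t k).1 (t k).2 :=
  (fromRel_adj _ _ _).mpr ⟨ht k, Or.inl ⟨k, rfl⟩⟩

lemma relGraph_le {G : SimpleGraph (Fin (m + 1))} (h : ∀ k, G.Adj (t k).1 (t k).2) :
    relGraph t ≤ G := by
  intro x y hxy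
  obtain ⟨-, ⟨k, hk⟩ | ⟨k, hk⟩⟩ := (fromRel_adj _ _ _).mp hxy
  · simpa [hk] using h k
  · simpa [hk] using (h k).symm

lemma edgeFinset_relGraph [Fintype (relGraph t).edgeSet] (ht : ∀ k, (t k).1 ≠ (t k).2) :
    (relGraph t).edgeFinset = Finset.univ.image fun k => s((t k).1, (t k).2) := by
  ext e
  induction e using Sym2.ind with
  | _ x y =>
    rw [mem_edgeFinset, mem_edgeSet]
    simp only [relGraph, fromRel_adj, Finset.mem_image, Finset.mem_univ, true_and, Sym2.eq_iff]
    constructor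
    · rintro ⟨-, ⟨k, hk⟩ | ⟨k, hk⟩⟩ <;> exact ⟨k, by simp [hk]⟩
    · rintro ⟨k, ⟨h1, h2⟩ | ⟨h1, h2⟩⟩
      · exact ⟨h1 ▸ h2 ▸ ht k, Or.inl ⟨k, by ext <;> simp [h1, h2]⟩⟩
      · exact ⟨h1 ▸ h2 ▸ (ht k).symm, Or.inr ⟨k, by ext <;> simp [h1, h2]⟩⟩

variable {A : Finset (Fin (m + 1))}

lemma cutPhi_sum_rows_eq_zero (ht : ∀ k, (t k).1 ≠ (t k).2)
    (hA : ∀ k, (t k).1 ∈ A ↔ (t k).2 ∈ A) (c : Fin m → MvPolynomial σ K) :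
    cutPhi K d A (∑ k, c k • taylorRel K m d (t k).1 (t k).2) = 0 := by
  simp [cutPhi_taylorRel_eq_zero (ht _) (hA _)]

lemma cutPhi_sum_rows (ht : ∀ k, (t k).1 ≠ (t k).2) {k₀ : Fin m}
    (hA : ∀ k ≠ k₀, (t k).1 ∈ A ↔ (t k).2 ∈ A) (c : Fin m → MvPolynomial σ K) :
    cutPhi K d A (∑ k, c k • taylorRel K m d (t k).1 (t k).2) =
      c k₀ * cutPhi K d A (taylorRel K m d (t k₀).1 (t k₀).2) := by
  rw [map_sum, Finset.sum_eq_single k₀ (fun k _ hk => ?_) (by simp), map_smul, smul_eq_mul]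
  rw [map_smul, cutPhi_taylorRel_eq_zero (ht k) (hA k hk), smul_zero]

lemma exists_eq_sum_rows (ht : IsHB K m d t) {p q : Fin (m + 1)} (hpq : p ≠ q) :
    ∃ c : Fin m → MvPolynomial σ K,
      taylorRel K m d p q = ∑ k, c k • taylorRel K m d (t k).1 (t k).2 := by
  obtain ⟨c, hc⟩ := (Submodule.mem_span_range_iff_exists_fun _).mp
    (ht.2 ▸ taylorRel_mem_ker_phi hpq)
  exact ⟨c, hc.symm⟩

lemma relGraph_le_taylorGraph (ht : IsHB K m d t) : relGraph t ≤ taylorGraph K m d :=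
  le_sSup ⟨t, ht, rfl⟩

lemma connected_relGraph_of_isHB (ht : IsHB K m d t) : (relGraph t).Connected := by
  classical
  refine (connected_iff _).mpr ⟨fun p q => ?_, ⟨0⟩⟩
  by_contra hpq
  let A := Finset.univ.filter ((relGraph t).Reachable p)
  have hA : ∀ k, (t k).1 ∈ A ↔ (t k).2 ∈ A := fun k => by
    simpa [A] using Adj.reachable_iff_reachable (relGraph_adj_row ht.1 k)
  have hne : p ≠ q := by rintro rfl; exact hpq .rfl
  obtain ⟨c, hc⟩ := exists_eq_sum_rows ht hne
  have := congrArg (cutPhi K d A) hc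
  rw [cutPhi_sum_rows_eq_zero ht.1 hA, cutPhi_taylorRel_of_mem_of_notMem (by simp [A])
    (by simpa [A] using hpq)] at this
  simp at this

lemma isTree_relGraph_of_isHB (ht : IsHB K m d t) : (relGraph t).IsTree := by
  classical
  have hconn := connected_relGraph_of_isHB ht
  refine isTree_iff_connected_and_card.mpr ⟨hconn, le_antisymm ?_
    hconn.card_vert_le_card_edgeSet_add_one⟩
  rw [Nat.card_eq_fintype_card, ← edgeFinset_card, edgeFinset_relGraph ht.1, Nat.card_fin]
  simpa using Finset.card_image_le (s := Finset.univ) (f := fun k => s((t k).1, (t k).2))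

lemma injective_row_of_isHB (ht : IsHB K m d t) :
    Function.Injective fun k => s((t k).1, (t k).2) := by
  classical
  have hcard := (isTree_relGraph_of_isHB ht).card_edgeFinset
  rw [edgeFinset_relGraph ht.1, Fintype.card_fin] at hcard
  rw [← Set.injOn_univ, ← Finset.coe_univ, ← Finset.card_image_iff]
  simpa using hcard

end HilbertBurch

section Exchange

variable {d : Fin (m + 1) → (σ →₀ ℕ)} {t : Fin m → Fin (m + 1) × Fin (m + 1)} {k₀ : Fin m}

lemma isHB_update (ht : IsHB K m d t) {i j : Fin (m + 1)} (hij : i ≠ j)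
    (c : Fin m → MvPolynomial σ K) (hc : c k₀ = 1)
    (hr : taylorRel K m d i j = ∑ k, c k • taylorRel K m d (t k).1 (t k).2) :
    IsHB K m d (Function.update t k₀ (i, j)) := by
  refine ⟨fun k => ?_, ?_⟩
  · by_cases hk : k = k₀
    · subst hk; simpa using hij
    · simpa [Function.update_of_ne hk] using ht.1 k
  · have hrows : (fun k => taylorRel K m d (Function.update t k₀ (i, j) k).1
        (Function.update t k₀ (i, j) k).2) =
        Function.update (fun k => taylorRel K m d (t k).1 (t k).2) k₀ (taylorRel K m d i j) :=
      funext (Function.apply_update (fun _ r => taylorRel K m d r.1 r.2) t k₀ (i, j))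
    rw [hrows, hr, Submodule.span_range_update_sum_smul _ _ hc, ht.2]

lemma exists_cut_of_isHB (ht : IsHB K m d t) (k₀ : Fin m) :
    ∃ A : Finset (Fin (m + 1)), (t k₀).1 ∈ A ∧ (t k₀).2 ∉ A ∧
      ∀ k ≠ k₀, (t k).1 ∈ A ↔ (t k).2 ∈ A := by
  classical
  let T := (relGraph t).deleteEdges {s((t k₀).1, (t k₀).2)}
  refine ⟨Finset.univ.filter (T.Reachable (t k₀).1), by simp, ?_, fun k hk => ?_⟩
  · simpa [isBridge_iff] using isAcyclic_iff_forall_adj_isBridge.mp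
      (isTree_relGraph_of_isHB ht).isAcyclic (relGraph_adj_row ht.1 k₀)
  · have hadj : T.Adj (t k).1 (t k).2 := (deleteEdges_adj ..).mpr
      ⟨relGraph_adj_row ht.1 k, fun h => hk (injective_row_of_isHB ht h)⟩
    simpa using Adj.reachable_iff_reachable hadj

lemma exists_eq_sum_rows_of_cut (ht : IsHB K m d t) {A : Finset (Fin (m + 1))}
    (ha : (t k₀).1 ∈ A) (hb : (t k₀).2 ∉ A) (hA : ∀ k ≠ k₀, (t k).1 ∈ A ↔ (t k).2 ∈ A)
    {i j : Fin (m + 1)} (hi : i ∈ A) (hj : j ∉ A) :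
    ∃ c : Fin m → MvPolynomial σ K,
      taylorRel K m d i j = ∑ k, c k • taylorRel K m d (t k).1 (t k).2 ∧
        monomial (d i ⊔ d j) 1 = c k₀ * monomial (d (t k₀).1 ⊔ d (t k₀).2) 1 := by
  obtain ⟨c, hc⟩ := exists_eq_sum_rows ht (ne_of_mem_of_not_mem hi hj)
  refine ⟨c, hc, ?_⟩
  have := congrArg (cutPhi K d A) hc
  rwa [cutPhi_sum_rows ht.1 hA, cutPhi_taylorRel_of_mem_of_notMem hi hj,
    cutPhi_taylorRel_of_mem_of_notMem ha hb, mul_neg, neg_inj] at this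

lemma exists_adj_isHB_update {c : ℕ}
    (hdeg : ∀ i j, (taylorGraph K m d).Adj i j → mdeg (d i ⊔ d j) = c) (ht : IsHB K m d t)
    {Γ : SimpleGraph (Fin (m + 1))} (hΓ : Γ ≤ taylorGraph K m d) (hconn : Γ.Connected)
    (k₀ : Fin m) : ∃ i j, Γ.Adj i j ∧ IsHB K m d (Function.update t k₀ (i, j)) := by
  obtain ⟨A, ha, hb, hA⟩ := exists_cut_of_isHB ht k₀
  obtain ⟨i, j, hij, hi, hj⟩ := hconn.exists_adj_mem_notMem (S := ↑A) ha hb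
  obtain ⟨c, hr, hmono⟩ := exists_eq_sum_rows_of_cut ht ha hb hA hi hj
  have hle : d (t k₀).1 ⊔ d (t k₀).2 ≤ d i ⊔ d j := by
    simpa using (monomial_dvd_monomial.mp (Dvd.intro_left _ hmono.symm)).1
  have hrow : (taylorGraph K m d).Adj (t k₀).1 (t k₀).2 :=
    relGraph_le_taylorGraph ht (relGraph_adj_row ht.1 k₀)
  rw [← eq_of_le_of_mdeg_le hle (by rw [hdeg _ _ (hΓ hij), hdeg _ _ hrow])] at hmono
  have hc : c k₀ = 1 := (mul_eq_right₀ (by simp)).mp hmono.symm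
  exact ⟨i, j, hij, isHB_update ht hij.ne c hc hr⟩

lemma mem_relTrees_of_isHB {c : ℕ}
    (hdeg : ∀ i j, (taylorGraph K m d).Adj i j → mdeg (d i ⊔ d j) = c)
    {Γ : SimpleGraph (Fin (m + 1))} (hΓ : Γ ≤ taylorGraph K m d) (hT : Γ.IsTree)
    (ht : IsHB K m d t) : Γ ∈ relTrees K m d := by
  classical
  suffices h : ∀ s : Finset (Fin m), ∀ t, IsHB K m d t →
      (∀ k ∉ s, Γ.Adj (t k).1 (t k).2) → Γ ∈ relTrees K m d from
    h Finset.univ t ht (by simp)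
  intro s
  induction s using Finset.induction_on with
  | empty =>
    intro t ht hadj
    exact ⟨t, ht, (maximal_isAcyclic_iff_isTree.mpr (isTree_relGraph_of_isHB ht)).eq_of_le
      hT.isAcyclic (relGraph_le fun k => hadj k (Finset.notMem_empty k))⟩
  | insert k₀ s _ ih =>
    intro t ht hadj
    obtain ⟨i, j, hij, ht'⟩ := exists_adj_isHB_update hdeg ht hΓ hT.connected k₀
    refine ih _ ht' fun k hk => ?_
    by_cases hk₀ : k = k₀
    · subst hk₀; simpa using hij
    · simpa [Function.update_of_ne hk₀] using hadj k (by simp [hk₀, hk])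

end Exchange

lemma isHB_of_zero (d : Fin (0 + 1) → (σ →₀ ℕ)) (t : Fin 0 → Fin (0 + 1) × Fin (0 + 1)) :
    IsHB K 0 d t := by
  refine ⟨finZeroElim, ?_⟩
  rw [Set.range_eq_empty, Submodule.span_empty, eq_comm, LinearMap.ker_eq_bot']
  intro v hv
  funext i
  rw [Fin.fin_one_eq_zero i]
  simpa [phi] using hv

lemma exists_isHB_of_connected_le {d : Fin (m + 1) → (σ →₀ ℕ)}
    {Γ : SimpleGraph (Fin (m + 1))} (hΓ : Γ ≤ taylorGraph K m d) (hconn : Γ.Connected) :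
    ∃ t, IsHB K m d t := by
  cases m with
  | zero => exact ⟨finZeroElim, isHB_of_zero d _⟩
  | succ m =>
    obtain ⟨i, j, hij, -⟩ :=
      hconn.exists_adj_mem_notMem (Set.mem_singleton 0) (b := 1) (by simp)
    obtain ⟨-, ⟨t, ht, rfl⟩, -⟩ := sSup_adj.mp (hΓ hij)
    exact ⟨t, ht⟩

lemma exists_mdeg_sup_eq_of_hasLinearRes {d : Fin (m + 1) → (σ →₀ ℕ)}
    (hlin : HasLinearRes K m d) :
    ∃ c, ∀ i j, (taylorGraph K m d).Adj i j → mdeg (d i ⊔ d j) = c := by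
  obtain ⟨c, hc⟩ := hlin.1
  refine ⟨1 + c, fun i j hij => ?_⟩
  obtain ⟨-, ⟨t, ht, rfl⟩, hadj⟩ := sSup_adj.mp hij
  obtain ⟨-, ⟨k, hk⟩ | ⟨k, hk⟩⟩ := (fromRel_adj _ _ _).mp hadj
  · simpa [mdeg_sup, hc, hk] using (hlin.2 t ht k).1
  · simpa [mdeg_sup, hc, hk] using (hlin.2 t ht k).2

end CMCodim2

open CMCodim2 MvPolynomial
theorem statement12_general (K : Type*) [Field K] {n m : ℕ}
    (d : Fin (m + 1) → (Fin n →₀ ℕ))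
    (hlin : HasLinearRes K m d) :
    relTrees K m d = {Γ : SimpleGraph (Fin (m + 1)) | Γ ≤ taylorGraph K m d ∧ Γ.IsTree} := by
  obtain ⟨c, hdeg⟩ := exists_mdeg_sup_eq_of_hasLinearRes hlin
  ext Γ
  constructor
  · rintro ⟨t, ht, rfl⟩
    exact ⟨relGraph_le_taylorGraph ht, isTree_relGraph_of_isHB ht⟩
  · rintro ⟨hΓ, hT⟩
    obtain ⟨t, ht⟩ := exists_isHB_of_connected_le hΓ hT.connected
    exact mem_relTrees_of_isHB hdeg hΓ hT ht

/-- Let `I ⊂ S` be a Cohen–Macaulay monomial ideal of codimension 2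
with a linear resolution. Then `T(I) = T(G(I))`: the set of relation trees of `I` is
exactly the set of spanning trees of the Taylor graph `G(I)`. -/
theorem statement12 (K : Type*) [Field K] {n m : ℕ}
    (d : Fin (m + 1) → (Fin n →₀ ℕ)) (I : Ideal (MvPolynomial (Fin n) K))
    (hgen : MinGens K m d I) (hcm : IsCMCodim2 I) (hlin : HasLinearRes K m d) :
    relTrees K m d = {Γ : SimpleGraph (Fin (m + 1)) | Γ ≤ taylorGraph K m d ∧ Γ.IsTree} :=
  statement12_general K d hlin
end
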